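/- Under the hypotheses of the Euler product theorem (a totally multiplicative, λ completely additive, absolute convergence for Re s > σ₀), multiplying the series by (1 - a 2 · exp(-λ 2 · s)) cancels all terms with even index: (1 - a 2 e^{-λ₂ s}) · ∑ₙ a_n e^{-λ_n s} = ∑_{n odd} a_n e^{-λ_n s}. -/

import Mathlib

/-! Doubling the index multiplies the `n`-th term by the second one, because `a` is totally
multiplicative and `λ` completely additive. Splitting the series into even and odd indices, the
even part is therefore `a 2 e^{-λ₂ s}` times the whole series, and subtracting it leaves the odd
part. -/

open Complex

theorem PNat.mem_range_two_mul_iff {n : ℕ+} : n ∈ Set.range (2 * ·) ↔ Even (n : ℕ) := by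
  constructor
  · rintro ⟨m, rfl⟩
    exact ⟨m, by simp [two_mul]⟩
  · rintro ⟨m, hm⟩
    have hm_pos : 0 < m := by have := n.pos; omega
    refine ⟨⟨m, hm_pos⟩, PNat.coe_injective ?_⟩
    change 2 * m = (n : ℕ)
    omega

theorem PNat.two_mul_injective : Function.Injective (fun n : ℕ+ => 2 * n) :=
  fun _ _ h => mul_left_cancel h

theorem tsum_pnat_eq_tsum_two_mul_add_tsum_odd {E : Type*} [AddCommGroup E] [UniformSpace E]
    [IsUniformAddGroup E] [CompleteSpace E] [T2Space E] {f : ℕ+ → E} (hf : Summable f) :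
    ∑' n, f n = ∑' n, f (2 * n) + ∑' n : ℕ+, if Odd (n : ℕ) then f n else 0 := by
  rw [← Summable.tsum_add_tsum_compl (s := Set.range (2 * ·)) (hf.subtype _) (hf.subtype _),
    tsum_range f PNat.two_mul_injective, tsum_subtype]
  refine congrArg _ (tsum_congr fun n => ?_)
  have hmem : n ∈ (Set.range (2 * ·))ᶜ ↔ Odd (n : ℕ) := by
    rw [Set.mem_compl_iff, PNat.mem_range_two_mul_iff, Nat.not_even_iff_odd]
  classical
  simp only [Set.indicator_apply, hmem]

theorem one_sub_mul_tsum_pnat_eq_tsum_odd {R : Type*} [Ring R] [UniformSpace R]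
    [IsUniformAddGroup R] [IsTopologicalRing R] [CompleteSpace R] [T2Space R]
    {f : ℕ+ → R} {c : R} (hf : Summable f) (hc : ∀ n, f (2 * n) = c * f n) :
    (1 - c) * ∑' n, f n = ∑' n : ℕ+, if Odd (n : ℕ) then f n else 0 := by
  have hsplit := tsum_pnat_eq_tsum_two_mul_add_tsum_odd hf
  simp only [hc, hf.tsum_mul_left] at hsplit
  rw [sub_mul, one_mul, sub_eq_iff_eq_add', ← hsplit]

theorem dirichlet_term_mul {a : ℕ → ℂ} {lam : ℕ → ℝ}
    (hamul : ∀ j k : ℕ, a (j * k) = a j * a k)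
    (hladd : ∀ j k : ℕ, 1 ≤ j → 1 ≤ k → lam (j * k) = lam j + lam k) (s : ℂ) (m n : ℕ+) :
    a ↑(m * n) * cexp (-(lam ↑(m * n) : ℂ) * s)
      = a m * cexp (-(lam m : ℂ) * s) * (a n * cexp (-(lam n : ℂ) * s)) := by
  rw [PNat.mul_coe, hamul, hladd _ _ m.pos n.pos, ofReal_add, neg_add, add_mul, exp_add]
  ring

theorem cancel_even_terms_general
    (a : ℕ → ℂ) (lam : ℕ → ℝ) (σ₀ : ℝ)
    (hamul : ∀ j k : ℕ, a (j * k) = a j * a k)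
    (hladd : ∀ j k : ℕ, 1 ≤ j → 1 ≤ k → lam (j * k) = lam j + lam k)
    (hsum : ∀ s : ℂ, σ₀ < s.re →
      Summable (fun n : ℕ+ => ‖a n * Complex.exp (-(lam n : ℂ) * s)‖))
    (s : ℂ) (hs : σ₀ < s.re) :
    (1 - a 2 * Complex.exp (-(lam 2 : ℂ) * s)) *
        ∑' n : ℕ+, a n * Complex.exp (-(lam n : ℂ) * s)
      = ∑' n : ℕ+, if Odd (n : ℕ) then a n * Complex.exp (-(lam n : ℂ) * s) else 0 :=
  one_sub_mul_tsum_pnat_eq_tsum_odd (hsum s hs).of_norm (dirichlet_term_mul hamul hladd s 2)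

theorem cancel_even_terms
    (a : ℕ → ℂ) (lam : ℕ → ℝ) (σ₀ : ℝ)
    (ha1 : a 1 = 1) (hamul : ∀ j k : ℕ, a (j * k) = a j * a k)
    (hl1 : lam 1 = 0)
    (hladd : ∀ j k : ℕ, 1 ≤ j → 1 ≤ k → lam (j * k) = lam j + lam k)
    (hsum : ∀ s : ℂ, σ₀ < s.re →
      Summable (fun n : ℕ+ => ‖a n * Complex.exp (-(lam n : ℂ) * s)‖))
    (s : ℂ) (hs : σ₀ < s.re) :
    (1 - a 2 * Complex.exp (-(lam 2 : ℂ) * s)) *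
        ∑' n : ℕ+, a n * Complex.exp (-(lam n : ℂ) * s)
      = ∑' n : ℕ+, if Odd (n : ℕ) then a n * Complex.exp (-(lam n : ℂ) * s) else 0 :=
  cancel_even_terms_general a lam σ₀ hamul hladd hsum s hs
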